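/- arXiv:0812.4567 — 4 statements merged into one kernel-verified Lean document; each statement's English description precedes it below -/
import Mathlib

section
/- Let K ∈ ℂ^{N×N} be positive semidefinite and let Q be a matrix such that Q K Q* > 0 (strictly positive definite) and rank(Q K Q*) = rank(K). Define the pseudoinverse K^{[-1]} = Q* (Q K Q*)^{-1} Q. Then I − K K^{[-1]} = (I − K K^{[-1]}) P_{Ker K}, where P_{Ker K} is the orthogonal projection onto the kernel of K. -/
open Matrix ComplexOrder

/-- `P` is the orthogonal projection (as a matrix) onto the kernel of `K`. -/
def IsKerProj {N : ℕ} (K P : Matrix (Fin N) (Fin N) ℂ) : Prop :=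
  P.IsHermitian ∧ P * P = P ∧ K * P = 0 ∧
    ∀ v : Fin N → ℂ, K.mulVec v = 0 → P.mulVec v = v

/-!
Write `G = (Q K Qᴴ)⁻¹`. Since `rank (Q K Qᴴ) ≤ rank (Q K) ≤ rank K`, the rank hypothesis forces
`ker (Q K) = ker K`. The columns of `1 - Qᴴ G Q K` lie in `ker (Q K)`, hence in `ker K`, which is
the identity `K Qᴴ G Q K = K`. So `B = 1 - K Qᴴ G Q` satisfies `B K = 0`: `B` vanishes on
`range K`, which for Hermitian `K` is `(ker K)ᗮ = range (1 - P)`, hence `B = B P`.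
-/

namespace Matrix

variable {l m n o 𝕜 : Type*} [Fintype m] [Fintype n] [Field 𝕜]

theorem ker_mulVecLin_mul_eq_of_rank_eq {A : Matrix l m 𝕜} {B : Matrix m n 𝕜}
    (h : (A * B).rank = B.rank) :
    LinearMap.ker (A * B).mulVecLin = LinearMap.ker B.mulVecLin := by
  have hle : LinearMap.ker B.mulVecLin ≤ LinearMap.ker (A * B).mulVecLin := by
    rw [mulVecLin_mul]
    exact LinearMap.ker_le_ker_comp _ _
  refine (Submodule.eq_of_le_of_finrank_eq hle ?_).symm
  have hAB := LinearMap.finrank_range_add_finrank_ker (A * B).mulVecLin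
  have hB := LinearMap.finrank_range_add_finrank_ker B.mulVecLin
  rw [← rank, h] at hAB
  rw [← rank] at hB
  omega

theorem mul_eq_zero_of_mul_mul_eq_zero [Fintype o] {A : Matrix l m 𝕜} {B : Matrix m n 𝕜}
    {X : Matrix n o 𝕜} (h : (A * B).rank = B.rank) (hX : A * B * X = 0) : B * X = 0 := by
  rw [ext_iff_mulVec]
  intro v
  have hv : X *ᵥ v ∈ LinearMap.ker (A * B).mulVecLin := by
    rw [LinearMap.mem_ker, mulVecLin_apply, mulVec_mulVec, hX, zero_mulVec]
  rw [ker_mulVecLin_mul_eq_of_rank_eq h] at hv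
  rwa [LinearMap.mem_ker, mulVecLin_apply, mulVec_mulVec, ← zero_mulVec v] at hv

theorem mul_mul_inv_mul_mul_eq_self [Fintype l] [DecidableEq l] [DecidableEq n]
    {K : Matrix m n 𝕜} {Q : Matrix l m 𝕜} {R : Matrix n l 𝕜} (hdet : IsUnit (Q * K * R).det)
    (hr : (Q * K * R).rank = K.rank) :
    K * R * (Q * K * R)⁻¹ * Q * K = K := by
  have hQK : (Q * K).rank = K.rank :=
    le_antisymm (rank_mul_le_right _ _) (hr ▸ rank_mul_le_left _ _)
  have hker : Q * K * (1 - R * (Q * K * R)⁻¹ * Q * K) = 0 := by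
    simp only [Matrix.mul_sub, Matrix.mul_one, ← Matrix.mul_assoc, mul_nonsing_inv _ hdet,
      Matrix.one_mul, sub_self]
  have hzero := mul_eq_zero_of_mul_mul_eq_zero hQK hker
  rwa [Matrix.mul_sub, Matrix.mul_one, sub_eq_zero, eq_comm, ← Matrix.mul_assoc,
    ← Matrix.mul_assoc, ← Matrix.mul_assoc] at hzero

end Matrix

namespace IsKerProj

variable {N : ℕ} {K P : Matrix (Fin N) (Fin N) ℂ}

theorem mul_eq_self_of_mul_eq_zero (hP : IsKerProj K P) {B : Matrix (Fin N) (Fin N) ℂ}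
    (hB : K * B = 0) : P * B = B := by
  rw [ext_iff_mulVec]
  intro v
  rw [← mulVec_mulVec]
  exact hP.2.2.2 _ (by rw [mulVec_mulVec, hB, zero_mulVec])

theorem mul_self_eq_of_mul_eq_zero (hP : IsKerProj K P) (hK : K.IsHermitian)
    {B : Matrix (Fin N) (Fin N) ℂ} (hB : B * K = 0) : B * P = B := by
  have hBK : K * Bᴴ = 0 := by
    rw [← hK.eq, ← conjTranspose_mul, hB, conjTranspose_zero]
  simpa [hP.1.eq] using congrArg conjTranspose (hP.mul_eq_self_of_mul_eq_zero hBK)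

end IsKerProj

/-- Let `K ≥ 0` and let `Q` satisfy `Q K Qᴴ > 0` and `rank (Q K Qᴴ) = rank K`. For the
pseudoinverse `K⁻¹ = Qᴴ (Q K Qᴴ)⁻¹ Q` one has `I − K K⁻¹ = (I − K K⁻¹) P_{Ker K}`. -/
theorem one_sub_pseudoInv_eq (N r : ℕ)
    (K : Matrix (Fin N) (Fin N) ℂ) (Q : Matrix (Fin r) (Fin N) ℂ)
    (hK : K.PosSemidef) (hQ : (Q * K * Qᴴ).PosDef)
    (hr : (Q * K * Qᴴ).rank = K.rank)
    (P : Matrix (Fin N) (Fin N) ℂ) (hP : IsKerProj K P) :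
    (1 : Matrix (Fin N) (Fin N) ℂ) - K * (Qᴴ * (Q * K * Qᴴ)⁻¹ * Q) =
      ((1 : Matrix (Fin N) (Fin N) ℂ) - K * (Qᴴ * (Q * K * Qᴴ)⁻¹ * Q)) * P := by
  have hdet : IsUnit (Q * K * Qᴴ).det := (isUnit_iff_isUnit_det _).mp hQ.isUnit
  have hKAK := mul_mul_inv_mul_mul_eq_self hdet hr
  refine (hP.mul_self_eq_of_mul_eq_zero hK.isHermitian ?_).symm
  simp only [Matrix.sub_mul, Matrix.one_mul, ← Matrix.mul_assoc, hKAK, sub_self]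
end

section
/- Let K_n = (s_{i+j})_{i,j=0}^n be a positive semidefinite Hankel block matrix with Hermitian blocks s_k ∈ ℂ^{m×m}. Suppose there exists a nondecreasing right-continuous ℂ^{m×m}-valued measure dσ on ℝ with ∫ λ^k dσ(λ) = s_k for k = 0,…,2n. Then every row vector f = (f_0,…,f_{n−1}) ∈ ℂ^{1×mn} in Ker K_{n−1} satisfies f · (s_{n+1},…,s_{2n})* = 0; equivalently P_{Ker K_{n−1}} (s_{n+1}; …; s_{2n}) = 0 (the column of blocks s_{n+1} through s_{2n}). -/
/-!
Let `F(x) = ∑ᵢ xⁱ fᵢ` be the row polynomial of `f`. Then `f K_{n-1} f* = ∫ F W F* dμ`, which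
vanishes because `f K_{n-1} = 0`; since `W ≥ 0` pointwise, this forces `F(x) W(x) = 0` for
μ-almost every `x`. Each block of `f (s_{n+1}; …; s_{2n})` is the moment `∫ x^{n+1} F W dμ`,
hence zero.
-/

open Matrix ComplexOrder MeasureTheory

theorem Complex.ae_eq_zero_of_integral_eq_zero_of_nonneg {α : Type*} [MeasurableSpace α]
    {μ : Measure α} {g : α → ℂ} (hg : ∀ x, 0 ≤ g x) (hint : Integrable g μ)
    (h0 : ∫ x, g x ∂μ = 0) : g =ᵐ[μ] 0 := by
  have hre : (fun x => (g x).re) =ᵐ[μ] 0 := by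
    refine (integral_eq_zero_iff_of_nonneg (fun x => (Complex.nonneg_iff.1 (hg x)).1)
      hint.re).1 ?_
    simpa [h0] using integral_re hint
  filter_upwards [hre] with x hx
  rw [Complex.eq_re_of_ofReal_le (hg x), hx, Pi.zero_apply, Complex.ofReal_zero, Pi.zero_apply]

theorem ae_vecMul_eq_zero_of_integral_vecMul_dotProduct_star_eq_zero {α ι : Type*}
    [MeasurableSpace α] [Fintype ι] {μ : Measure α} {W : α → Matrix ι ι ℂ}
    (hW : ∀ x, (W x).PosSemidef) {v : α → ι → ℂ}
    (hint : Integrable (fun x => v x ᵥ* W x ⬝ᵥ star (v x)) μ)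
    (h0 : ∫ x, v x ᵥ* W x ⬝ᵥ star (v x) ∂μ = 0) : ∀ᵐ x ∂μ, v x ᵥ* W x = 0 := by
  have hform : ∀ x, v x ᵥ* W x ⬝ᵥ star (v x) = star (star (v x)) ⬝ᵥ (W x *ᵥ star (v x)) :=
    fun x => by rw [star_star, dotProduct_mulVec]
  simp only [hform] at hint h0
  filter_upwards [Complex.ae_eq_zero_of_integral_eq_zero_of_nonneg
    (fun x => (hW x).dotProduct_mulVec_nonneg _) hint h0] with x hx
  have hWv : W x *ᵥ star (v x) = 0 := ((hW x).dotProduct_mulVec_zero_iff _).1 hx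
  rw [← star_star (v x), ← (hW x).1.eq, ← star_mulVec, hWv, star_zero]

section BlockHankel

variable {ι : Type*} [Fintype ι]

def blockHankel (n : ℕ) (s : ℕ → Matrix ι ι ℂ) : Matrix (Fin n × ι) (Fin n × ι) ℂ :=
  of fun p q => s (p.1 + q.1) p.2 q.2

def hankelColumn (n : ℕ) (s : ℕ → Matrix ι ι ℂ) (k : ℕ) : Matrix (Fin n × ι) ι ℂ :=
  of fun p b => s (k + p.1) p.2 b

theorem vecMul_hankelColumn_apply {n : ℕ} (s : ℕ → Matrix ι ι ℂ) (f : Fin n × ι → ℂ)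
    (j : Fin n) (b : ι) : (f ᵥ* hankelColumn n s j) b = (f ᵥ* blockHankel n s) (j, b) := by
  simp only [vecMul, dotProduct, hankelColumn, blockHankel, of_apply, add_comm]

def blockRowPoly {n : ℕ} (f : Fin n × ι → ℂ) (x : ℝ) : ι → ℂ :=
  fun a => ∑ i : Fin n, f (i, a) * (x : ℂ) ^ (i : ℕ)

theorem pow_mul_vecMul_blockRowPoly {n : ℕ} (f : Fin n × ι → ℂ) (M : Matrix ι ι ℂ) (x : ℝ)
    (k : ℕ) (b : ι) :
    (x : ℂ) ^ k * (blockRowPoly f x ᵥ* M) b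
      = ∑ p : Fin n × ι, f p * ((x : ℂ) ^ (k + p.1) * M p.2 b) := by
  simp only [vecMul, dotProduct, blockRowPoly, Finset.sum_mul, Finset.mul_sum,
    Fintype.sum_prod_type]
  rw [Finset.sum_comm]
  refine Finset.sum_congr rfl fun a _ => Finset.sum_congr rfl fun i _ => ?_
  ring

theorem dotProduct_star_blockRowPoly {n : ℕ} (f : Fin n × ι → ℂ) (v : ι → ℂ) (x : ℝ) :
    v ⬝ᵥ star (blockRowPoly f x)
      = ∑ q : Fin n × ι, star (f q) * ((x : ℂ) ^ (q.1 : ℕ) * v q.2) := by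
  simp only [dotProduct, blockRowPoly, Pi.star_apply, star_sum, star_mul', Complex.star_def,
    Complex.conj_ofReal, map_pow, Finset.mul_sum, Fintype.sum_prod_type]
  rw [Finset.sum_comm]
  refine Finset.sum_congr rfl fun i _ => Finset.sum_congr rfl fun a _ => ?_
  ring

variable {μ : Measure ℝ} {W : ℝ → Matrix ι ι ℂ} {s : ℕ → Matrix ι ι ℂ} {N n k : ℕ}

theorem integrable_pow_mul_vecMul_blockRowPoly
    (hint : ∀ k ≤ N, ∀ a b : ι, Integrable (fun x : ℝ => (x : ℂ) ^ k * W x a b) μ)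
    (hk : k + n ≤ N + 1) (f : Fin n × ι → ℂ) (b : ι) :
    Integrable (fun x : ℝ => (x : ℂ) ^ k * (blockRowPoly f x ᵥ* W x) b) μ := by
  simp only [pow_mul_vecMul_blockRowPoly]
  exact integrable_finsetSum _ fun p _ =>
    (hint _ (by have := p.1.isLt; omega) p.2 b).const_mul (f p)

theorem integral_pow_mul_vecMul_blockRowPoly
    (hint : ∀ k ≤ N, ∀ a b : ι, Integrable (fun x : ℝ => (x : ℂ) ^ k * W x a b) μ)
    (hmom : ∀ k ≤ N, ∀ a b : ι, ∫ x : ℝ, (x : ℂ) ^ k * W x a b ∂μ = s k a b)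
    (hk : k + n ≤ N + 1) (f : Fin n × ι → ℂ) (b : ι) :
    ∫ x, (x : ℂ) ^ k * (blockRowPoly f x ᵥ* W x) b ∂μ = (f ᵥ* hankelColumn n s k) b := by
  have hle : ∀ p : Fin n × ι, k + p.1 ≤ N := fun p => by have := p.1.isLt; omega
  simp only [pow_mul_vecMul_blockRowPoly]
  rw [integral_finsetSum _ fun p _ => (hint _ (hle p) p.2 b).const_mul (f p)]
  simp only [integral_const_mul, hmom _ (hle _), vecMul, dotProduct, hankelColumn, of_apply]

theorem integrable_vecMul_blockRowPoly_dotProduct_star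
    (hint : ∀ k ≤ N, ∀ a b : ι, Integrable (fun x : ℝ => (x : ℂ) ^ k * W x a b) μ)
    (hN : 2 * n ≤ N + 2) (f : Fin n × ι → ℂ) :
    Integrable (fun x => blockRowPoly f x ᵥ* W x ⬝ᵥ star (blockRowPoly f x)) μ := by
  simp only [dotProduct_star_blockRowPoly]
  exact integrable_finsetSum _ fun q _ =>
    (integrable_pow_mul_vecMul_blockRowPoly hint (by have := q.1.isLt; omega) f q.2).const_mul _

theorem integral_vecMul_blockRowPoly_dotProduct_star
    (hint : ∀ k ≤ N, ∀ a b : ι, Integrable (fun x : ℝ => (x : ℂ) ^ k * W x a b) μ)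
    (hmom : ∀ k ≤ N, ∀ a b : ι, ∫ x : ℝ, (x : ℂ) ^ k * W x a b ∂μ = s k a b)
    (hN : 2 * n ≤ N + 2) (f : Fin n × ι → ℂ) :
    ∫ x, blockRowPoly f x ᵥ* W x ⬝ᵥ star (blockRowPoly f x) ∂μ
      = f ᵥ* blockHankel n s ⬝ᵥ star f := by
  have hk : ∀ q : Fin n × ι, (q.1 : ℕ) + n ≤ N + 1 := fun q => by have := q.1.isLt; omega
  simp only [dotProduct_star_blockRowPoly]
  rw [integral_finsetSum _ fun q _ =>
    (integrable_pow_mul_vecMul_blockRowPoly hint (hk q) f q.2).const_mul _]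
  refine Finset.sum_congr rfl fun q _ => ?_
  rw [integral_const_mul, integral_pow_mul_vecMul_blockRowPoly hint hmom (hk q),
    vecMul_hankelColumn_apply, mul_comm, Pi.star_apply]

end BlockHankel

theorem kerProj_moment_column_eq_zero_general (m n : ℕ)
    (s : ℕ → Matrix (Fin m) (Fin m) ℂ)
    (μ : Measure ℝ) (W : ℝ → Matrix (Fin m) (Fin m) ℂ)
    (hW : ∀ x : ℝ, (W x).PosSemidef)
    (hint : ∀ k ≤ 2 * n, ∀ a b : Fin m,
      Integrable (fun x : ℝ => (x : ℂ) ^ k * W x a b) μ)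
    (hmom : ∀ k ≤ 2 * n, ∀ a b : Fin m,
      (∫ x : ℝ, (x : ℂ) ^ k * W x a b ∂μ) = s k a b)
    (f : Fin n × Fin m → ℂ)
    (hf : Matrix.vecMul f (Matrix.of fun p q : Fin n × Fin m =>
      s ((p.1 : ℕ) + (q.1 : ℕ)) p.2 q.2) = 0) :
    Matrix.vecMul f (Matrix.of fun (p : Fin n × Fin m) (b : Fin m) =>
      s (n + 1 + (p.1 : ℕ)) p.2 b) = 0 := by
  have hquad : ∫ x, blockRowPoly f x ᵥ* W x ⬝ᵥ star (blockRowPoly f x) ∂μ = 0 := by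
    rw [integral_vecMul_blockRowPoly_dotProduct_star hint hmom (by omega), blockHankel, hf,
      zero_dotProduct]
  have hker : ∀ᵐ x ∂μ, blockRowPoly f x ᵥ* W x = 0 :=
    ae_vecMul_eq_zero_of_integral_vecMul_dotProduct_star_eq_zero hW
      (integrable_vecMul_blockRowPoly_dotProduct_star hint (by omega) f) hquad
  funext b
  rw [← hankelColumn, ← integral_pow_mul_vecMul_blockRowPoly hint hmom (by omega) f b]
  refine integral_eq_zero_of_ae ?_
  filter_upwards [hker] with x hx
  rw [hx, Pi.zero_apply, mul_zero, Pi.zero_apply]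

/-- Let `K_n = (s_{i+j})_{i,j=0}^n ≥ 0` be a Hankel block matrix with Hermitian blocks
`s_k ∈ ℂ^{m×m}`, and suppose there is a positive `ℂ^{m×m}`-valued measure (represented by
a positive measure `μ` with pointwise positive semidefinite matrix density `W`) whose
moments of order `k = 0,…,2n` equal `s_k`. Then every row vector
`f ∈ Ker K_{n−1}` satisfies `f ⬝ (s_{n+1}; …; s_{2n}) = 0`, i.e.
`P_{Ker K_{n−1}} (s_{n+1}; …; s_{2n}) = 0`. -/
theorem kerProj_moment_column_eq_zero (m n : ℕ)
    (s : ℕ → Matrix (Fin m) (Fin m) ℂ)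
    (hherm : ∀ k, (s k).IsHermitian)
    (hPSD : (Matrix.of fun p q : Fin (n + 1) × Fin m =>
      s ((p.1 : ℕ) + (q.1 : ℕ)) p.2 q.2).PosSemidef)
    (μ : Measure ℝ) (W : ℝ → Matrix (Fin m) (Fin m) ℂ)
    (hW : ∀ x : ℝ, (W x).PosSemidef)
    (hint : ∀ k ≤ 2 * n, ∀ a b : Fin m,
      Integrable (fun x : ℝ => (x : ℂ) ^ k * W x a b) μ)
    (hmom : ∀ k ≤ 2 * n, ∀ a b : Fin m,
      (∫ x : ℝ, (x : ℂ) ^ k * W x a b ∂μ) = s k a b)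
    (f : Fin n × Fin m → ℂ)
    (hf : Matrix.vecMul f (Matrix.of fun p q : Fin n × Fin m =>
      s ((p.1 : ℕ) + (q.1 : ℕ)) p.2 q.2) = 0) :
    Matrix.vecMul f (Matrix.of fun (p : Fin n × Fin m) (b : Fin m) =>
      s (n + 1 + (p.1 : ℕ)) p.2 b) = 0 :=
  kerProj_moment_column_eq_zero_general m n s μ W hW hint hmom f hf
end

section
/- Let K ∈ ℂ^{N×N} be positive semidefinite, and suppose Q ∈ ℂ^{r×N} and N' ∈ ℂ^{r×r} satisfy Q K Q* > 0, rank Q K Q* = rank K, and Q F = N' Q for some matrix F ∈ ℂ^{N×N}. Define K^{[-1]} = Q*(QKQ*)^{−1}Q. Then for every j ≥ 0, K^{[-1]} F^j (I − K K^{[-1]}) = 0, and consequently K^{[-1]} (I − zF)^{−1} (I − K K^{[-1]}) = 0 for every z ∈ ℂ such that I − zF is invertible. -/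
open Matrix ComplexOrder

/-!
Put `M = Q K Qᴴ` and `R = K Qᴴ M⁻¹`. Then `Q R = 1` and `K K^{[-1]} = R Q`, so
`I − K K^{[-1]} = I − R Q` is killed by `Q` on the left. Since `K^{[-1]}` begins with `Q`, it
suffices that `Q G = G' Q` for `G = F^j` and `G = (I − zF)⁻¹`. For powers this is immediate
from `Q F = N' Q`; for the inverse, `(I − zN') (Q (I − zF)⁻¹ R) = 1`, so `I − zN'` is
invertible too and `Q (I − zF)⁻¹ = (I − zN')⁻¹ Q`.
-/

namespace Matrix

variable {m n α : Type*} [Fintype m] [Fintype n]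

theorem mul_pow_eq_pow_mul_of_mul_eq [Semiring α] [DecidableEq n] [DecidableEq m]
    {Q : Matrix m n α} {F : Matrix n n α} {N : Matrix m m α} (h : Q * F = N * Q) (j : ℕ) :
    Q * F ^ j = N ^ j * Q := by
  induction j with
  | zero => simp
  | succ j ih => rw [pow_succ, pow_succ, ← Matrix.mul_assoc, ih, Matrix.mul_assoc, h,
      Matrix.mul_assoc]

theorem mul_nonsing_inv_eq_of_mul_eq [CommRing α] [DecidableEq n] [DecidableEq m]
    {Q : Matrix m n α} {R : Matrix n m α} {A : Matrix n n α} {B : Matrix m m α}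
    (hQR : Q * R = 1) (h : Q * A = B * Q) (hA : IsUnit A) :
    Q * A⁻¹ = B⁻¹ * Q := by
  have hA' : A * A⁻¹ = 1 := mul_nonsing_inv A ((isUnit_iff_isUnit_det A).mp hA)
  have hB : B * (Q * A⁻¹ * R) = 1 := by
    rw [← Matrix.mul_assoc, ← Matrix.mul_assoc, ← h, Matrix.mul_assoc Q, hA', Matrix.mul_one, hQR]
  have hB' : B⁻¹ * B = 1 := nonsing_inv_mul B (isUnit_det_of_right_inverse hB)
  calc Q * A⁻¹ = B⁻¹ * B * Q * A⁻¹ := by rw [hB', Matrix.one_mul]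
    _ = B⁻¹ * Q * (A * A⁻¹) := by rw [Matrix.mul_assoc B⁻¹, ← h]; simp only [Matrix.mul_assoc]
    _ = B⁻¹ * Q := by rw [hA', Matrix.mul_one]

theorem mul_mul_one_sub_mul_eq_zero {l : Type*} [Ring α] [DecidableEq n] [DecidableEq m]
    {Q : Matrix m n α} {R : Matrix n m α} {G : Matrix n n α} {G' : Matrix m m α}
    (L : Matrix l m α) (hQR : Q * R = 1) (h : Q * G = G' * Q) :
    L * Q * G * (1 - R * Q) = 0 := by
  rw [Matrix.mul_assoc L, h, Matrix.mul_assoc, Matrix.mul_assoc, Matrix.mul_sub, Matrix.mul_one,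
    ← Matrix.mul_assoc Q, hQR, Matrix.one_mul, sub_self, Matrix.mul_zero, Matrix.mul_zero]

end Matrix

theorem pseudoInv_shift_annihilates_general (N r : ℕ)
    (K F : Matrix (Fin N) (Fin N) ℂ) (Q : Matrix (Fin r) (Fin N) ℂ)
    (N' : Matrix (Fin r) (Fin r) ℂ)
    (hQ : (Q * K * Qᴴ).PosDef)
    (hQF : Q * F = N' * Q) :
    (∀ j : ℕ, (Qᴴ * (Q * K * Qᴴ)⁻¹ * Q) * F ^ j *
        (1 - K * (Qᴴ * (Q * K * Qᴴ)⁻¹ * Q)) = 0) ∧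
      ∀ z : ℂ, IsUnit (1 - z • F) →
        (Qᴴ * (Q * K * Qᴴ)⁻¹ * Q) * (1 - z • F)⁻¹ *
          (1 - K * (Qᴴ * (Q * K * Qᴴ)⁻¹ * Q)) = 0 := by
  set M := Q * K * Qᴴ
  have hQR : Q * (K * Qᴴ * M⁻¹) = 1 := by
    rw [← Matrix.mul_assoc, ← Matrix.mul_assoc]
    exact mul_nonsing_inv M (isUnit_iff_ne_zero.mpr hQ.det_pos.ne')
  have hKP : K * (Qᴴ * M⁻¹ * Q) = K * Qᴴ * M⁻¹ * Q := by simp only [Matrix.mul_assoc]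
  have hQFz (z : ℂ) : Q * (1 - z • F) = (1 - z • N') * Q := by
    rw [Matrix.mul_sub, Matrix.sub_mul, Matrix.mul_one, Matrix.one_mul, Matrix.mul_smul,
      Matrix.smul_mul, hQF]
  rw [hKP]
  exact ⟨fun j => mul_mul_one_sub_mul_eq_zero _ hQR (mul_pow_eq_pow_mul_of_mul_eq hQF j),
    fun z hz => mul_mul_one_sub_mul_eq_zero _ hQR (mul_nonsing_inv_eq_of_mul_eq hQR (hQFz z) hz)⟩

/-- Let `K ≥ 0`, and suppose `Q`, `N'` satisfy `Q K Qᴴ > 0`, `rank (Q K Qᴴ) = rank K` and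
`Q F = N' Q`. Then for the pseudoinverse `K⁻¹ = Qᴴ (Q K Qᴴ)⁻¹ Q` one has
`K⁻¹ F^j (I − K K⁻¹) = 0` for all `j ≥ 0`, and `K⁻¹ (I − zF)⁻¹ (I − K K⁻¹) = 0` for
every `z` such that `I − zF` is invertible. -/
theorem pseudoInv_shift_annihilates (N r : ℕ)
    (K F : Matrix (Fin N) (Fin N) ℂ) (Q : Matrix (Fin r) (Fin N) ℂ)
    (N' : Matrix (Fin r) (Fin r) ℂ)
    (hK : K.PosSemidef) (hQ : (Q * K * Qᴴ).PosDef)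
    (hr : (Q * K * Qᴴ).rank = K.rank)
    (hQF : Q * F = N' * Q) :
    (∀ j : ℕ, (Qᴴ * (Q * K * Qᴴ)⁻¹ * Q) * F ^ j *
        (1 - K * (Qᴴ * (Q * K * Qᴴ)⁻¹ * Q)) = 0) ∧
      ∀ z : ℂ, IsUnit (1 - z • F) →
        (Qᴴ * (Q * K * Qᴴ)⁻¹ * Q) * (1 - z • F)⁻¹ *
          (1 - K * (Qᴴ * (Q * K * Qᴴ)⁻¹ * Q)) = 0 :=
  pseudoInv_shift_annihilates_general N r K F Q N' hQ hQF
end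

section
/- Let R = (R_1, R_2) ∈ ℂ^{l×2m} satisfy R_1 R_2* − R_2 R_1* = 0 (i.e. R is J-neutral for J = [[0, iI_m],[−iI_m, 0]], meaning R J R* = 0). Then rank R = rank(R_1 + iR_2). -/
/-!
Both `rank R` and `rank (R₁ + i R₂)` are ranks of Gram matrices, since `rank (A Aᴴ) = rank A`.
The Gram matrices are `R₁ R₁ᴴ + R₂ R₂ᴴ` and `R₁ R₁ᴴ + R₂ R₂ᴴ + i (R₂ R₁ᴴ - R₁ R₂ᴴ)`, which
agree exactly when `R` is `J`-neutral.
-/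

open Matrix

variable {l m n : Type*} [Fintype m] [Fintype n]

theorem Matrix.fromCols_mul_conjTranspose_fromCols {R : Type*} [Semiring R] [StarRing R]
    (A : Matrix l m R) (B : Matrix l n R) :
    fromCols A B * (fromCols A B)ᴴ = A * Aᴴ + B * Bᴴ := by
  rw [conjTranspose_fromCols_eq_fromRows_conjTranspose, fromCols_mul_fromRows]

theorem Matrix.add_I_smul_mul_conjTranspose (A B : Matrix l m ℂ) :
    (A + Complex.I • B) * (A + Complex.I • B)ᴴ =
      A * Aᴴ + B * Bᴴ + Complex.I • (B * Aᴴ - A * Bᴴ) := by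
  simp only [conjTranspose_add, conjTranspose_smul, Complex.star_def, Complex.conj_I,
    Matrix.add_mul, Matrix.mul_add, Matrix.smul_mul, Matrix.mul_smul, neg_smul, Matrix.mul_neg,
    smul_add, smul_smul, Complex.I_mul_I, one_smul, smul_sub]
  abel

open scoped ComplexOrder in
theorem Matrix.rank_fromCols_eq_rank_add_I_smul [Fintype l] {A B : Matrix l m ℂ}
    (h : A * Bᴴ = B * Aᴴ) : (fromCols A B).rank = (A + Complex.I • B).rank := by
  rw [← rank_self_mul_conjTranspose, ← rank_self_mul_conjTranspose (A + Complex.I • B),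
    fromCols_mul_conjTranspose_fromCols, add_I_smul_mul_conjTranspose, h, sub_self, smul_zero,
    add_zero]

/-- If `R = (R₁, R₂) ∈ ℂ^{l×2m}` is `J`-neutral, i.e. `R₁ R₂ᴴ − R₂ R₁ᴴ = 0`, then
`rank R = rank (R₁ + i R₂)`. -/
theorem rank_of_J_neutral (l m : ℕ)
    (R₁ R₂ : Matrix (Fin l) (Fin m) ℂ)
    (hneutral : R₁ * R₂ᴴ - R₂ * R₁ᴴ = 0) :
    (Matrix.of fun (i : Fin l) (j : Fin m ⊕ Fin m) =>
        Sum.elim (R₁ i) (R₂ i) j).rank = (R₁ + Complex.I • R₂).rank :=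
  rank_fromCols_eq_rank_add_I_smul (sub_eq_zero.mp hneutral)
end
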